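/- arXiv:2103.17097 — 3 statements merged into one kernel-verified Lean document; each statement's English description precedes it below -/
import Mathlib

section
/- In the power series ring ℤ_p[[π]], writing t = log(1+π) = Σ_{k≥0} (-1)^k π^{k+1}/(k+1) as a formal power series over ℚ_p, the formal inverse series π/t = 1 + b_1 π + b_2 π² + ⋯ has coefficients satisfying v_p(b_k) ≥ -k/(p-1) for all k ≥ 1. -/
/-!
The series `t/π` has constant term `1` and `m`-th coefficient of norm
`‖1/(m+1)‖ = p ^ v_p(m+1) ≤ p ^ (m/(p-1))`, by Bernoulli's inequality `1 + v(p-1) ≤ p^v ≤ m+1`.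
Since this bound is multiplicative in `m`, the recursion
`b_n = -∑_{i<n} a_{i+1} b_{n-1-i}` and the ultrametric inequality propagate it to
`‖b_n‖ ≤ p ^ (n/(p-1))`, which is the claim.
-/

open Finset

namespace PowerSeries

lemma coeff_eq_neg_sum_of_mul_eq_one {R : Type*} [Ring R] {a b : R⟦X⟧}
    (ha : constantCoeff a = 1) (hab : a * b = 1) {n : ℕ} (hn : n ≠ 0) :
    coeff n b = -∑ i ∈ range n, coeff (i + 1) a * coeff (n - (i + 1)) b := by
  have h := congrArg (coeff n) hab
  rw [coeff_mul, coeff_one, if_neg hn, Nat.sum_antidiagonal_eq_sum_range_succ_mk,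
    sum_range_succ'] at h
  simp only [coeff_zero_eq_constantCoeff_apply, ha, one_mul, Nat.sub_zero] at h
  exact eq_neg_of_add_eq_zero_right h

lemma norm_coeff_le_pow_of_mul_eq_one {R : Type*} [SeminormedRing R] [IsUltrametricDist R]
    {a b : R⟦X⟧} {r : ℝ} (ha₀ : constantCoeff a = 1) (ha : ∀ m, ‖coeff m a‖ ≤ r ^ m)
    (hab : a * b = 1) (n : ℕ) : ‖coeff n b‖ ≤ r ^ n := by
  induction n using Nat.strong_induction_on with
  | _ n ih =>
    rcases eq_or_ne n 0 with rfl | hn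
    · have hb₀ : coeff 0 b = 1 := by
        simpa [ha₀] using congrArg (coeff 0) hab
      simpa [hb₀, ha₀] using ha 0
    rw [coeff_eq_neg_sum_of_mul_eq_one ha₀ hab hn, norm_neg]
    refine IsUltrametricDist.norm_sum_le_of_forall_le_of_nonempty (nonempty_range_iff.mpr hn)
      fun i hi => ?_
    have hi : i < n := mem_range.mp hi
    have hr : 0 ≤ r := by simpa using (norm_nonneg _).trans (ha 1)
    calc ‖coeff (i + 1) a * coeff (n - (i + 1)) b‖
        ≤ ‖coeff (i + 1) a‖ * ‖coeff (n - (i + 1)) b‖ := norm_mul_le _ _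
      _ ≤ r ^ (i + 1) * r ^ (n - (i + 1)) :=
          mul_le_mul (ha _) (ih _ (by omega)) (norm_nonneg _) (pow_nonneg hr _)
      _ = r ^ n := by rw [← pow_add, Nat.add_sub_cancel' hi]

end PowerSeries

lemma sub_one_mul_padicValNat_succ_le (p n : ℕ) :
    ((p : ℝ) - 1) * padicValNat p (n + 1) ≤ n := by
  have hpow : (p : ℝ) ^ padicValNat p (n + 1) ≤ n + 1 := by
    exact_mod_cast Nat.le_of_dvd n.succ_pos pow_padicValNat_dvd
  have hbern := one_add_mul_sub_le_pow (a := (p : ℝ))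
    (by linarith [(Nat.cast_nonneg p : (0 : ℝ) ≤ p)]) (padicValNat p (n + 1))
  linarith

namespace Padic

variable {p : ℕ} [hp : Fact p.Prime]

lemma norm_natCast_succ_inv_le (n : ℕ) :
    ‖((n + 1 : ℕ) : ℚ_[p])‖⁻¹ ≤ (p : ℝ) ^ ((n : ℝ) / (p - 1)) := by
  have hp1 : (1 : ℝ) < p := by exact_mod_cast hp.out.one_lt
  rw [norm_eq_zpow_neg_valuation (by exact_mod_cast n.succ_ne_zero), valuation_natCast,
    zpow_neg, inv_inv, ← Real.rpow_intCast, Int.cast_natCast]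
  refine Real.rpow_le_rpow_of_exponent_le hp1.le ?_
  rw [le_div_iff₀ (by linarith), mul_comm]
  exact sub_one_mul_padicValNat_succ_le p n

lemma neg_le_valuation_of_norm_le_rpow {x : ℚ_[p]} {s : ℝ} (hs : 0 ≤ s)
    (hx : ‖x‖ ≤ (p : ℝ) ^ s) : -s ≤ x.valuation := by
  rcases eq_or_ne x 0 with rfl | hx₀
  · simpa using hs
  have hp1 : (1 : ℝ) < p := by exact_mod_cast hp.out.one_lt
  rw [norm_eq_zpow_neg_valuation hx₀, ← Real.rpow_intCast,
    Real.rpow_le_rpow_left_iff hp1] at hx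
  push_cast at hx
  linarith

end Padic

theorem stmt4_general (p : ℕ) [hp : Fact p.Prime] (b : PowerSeries ℚ_[p])
    (hb : (PowerSeries.mk fun k => ((-1 : ℚ_[p]) ^ k) / ((k : ℚ_[p]) + 1)) * b = 1)
    (k : ℕ) :
    (-(k : ℚ) / ((p : ℚ) - 1)) ≤ ((PowerSeries.coeff k b).valuation : ℚ) := by
  set r : ℝ := (p : ℝ) ^ ((p : ℝ) - 1)⁻¹
  have hr : ∀ n : ℕ, r ^ n = (p : ℝ) ^ ((n : ℝ) / (p - 1)) := fun n => by
    rw [← Real.rpow_natCast, ← Real.rpow_mul p.cast_nonneg, inv_mul_eq_div]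
  have hcoeff : ∀ m : ℕ, ‖PowerSeries.coeff m
      (PowerSeries.mk fun k => ((-1 : ℚ_[p]) ^ k) / ((k : ℚ_[p]) + 1))‖ ≤ r ^ m := fun m => by
    rw [PowerSeries.coeff_mk, norm_div, norm_pow, norm_neg, norm_one, one_pow, one_div,
      ← Nat.cast_succ, hr]
    exact Padic.norm_natCast_succ_inv_le m
  have hbk := PowerSeries.norm_coeff_le_pow_of_mul_eq_one (by simp) hcoeff hb k
  rw [hr] at hbk
  have hval := Padic.neg_le_valuation_of_norm_le_rpow
    (div_nonneg k.cast_nonneg (sub_nonneg.2 (mod_cast hp.out.one_lt.le))) hbk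
  rw [neg_div]
  exact_mod_cast hval

/-- In `ℚ_p[[π]]`, writing `t/π = Σ_{k≥0} (-1)^k π^k/(k+1)` (where `t = log(1+π)`),
the coefficients `b_k` of the formal multiplicative inverse `π/t = 1 + b_1 π + ⋯`
satisfy `v_p(b_k) ≥ -k/(p-1)` for all `k ≥ 1`. -/
theorem stmt4 (p : ℕ) [hp : Fact p.Prime] (b : PowerSeries ℚ_[p])
    (hb : (PowerSeries.mk fun k => ((-1 : ℚ_[p]) ^ k) / ((k : ℚ_[p]) + 1)) * b = 1)
    (k : ℕ) (hk : 1 ≤ k) :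
    (-(k : ℚ) / ((p : ℚ) - 1)) ≤ ((PowerSeries.coeff k b).valuation : ℚ) :=
  stmt4_general p (hp := hp) b hb k
end

section
/- For the ring homomorphism φ on ℤ_p[[π]] defined by φ(π) = (1+π)^p - 1 and ξ ∈ ℤ_p[[π]] (or in any φ-stable ℤ_p-algebra) with φ(ξ) = ξ^p + py for some y: the divided power φ(ξ^k/k!) equals (p^k/k!)·(y + (p-1)!·ξ^p/p!)^k, and p^k/k! ∈ ℤ_p for all k ≥ 0, so divided powers of ξ are stable under φ in the p-adically completed divided power envelope. -/
/-!
Since `φ(ξ) = p · (y + ξ^p/p)` and `(p-1)!/p! = 1/p`, applying `φ` to `ξ^k/k!` gives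
`φ(ξ)^k/k! = (p^k/k!) · (y + ξ^p/p)^k`. The coefficient `p^k/k!` is `p`-integral because
Legendre's formula gives `v_p(k!) = (k - s_p(k))/(p-1) ≤ k`.
-/

theorem Nat.cast_factorial_pred_div_factorial {n : ℕ} (hn : n ≠ 0) :
    ((n - 1).factorial : ℚ) / n.factorial = (n : ℚ)⁻¹ := by
  rw [← Nat.mul_factorial_pred hn, Nat.cast_mul, div_mul_cancel_right₀ (by positivity)]

theorem RingHom.map_inv_factorial_smul_pow {A : Type*} [CommRing A] [Algebra ℚ A]
    (φ : A →+* A) {p : ℕ} (hp : p ≠ 0) {ξ y : A} (h : φ ξ = ξ ^ p + p * y) (k : ℕ) :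
    φ ((k.factorial : ℚ)⁻¹ • ξ ^ k) =
      ((p : ℚ) ^ k / k.factorial) • (y + (p : ℚ)⁻¹ • ξ ^ p) ^ k := by
  have hp' : (p : ℚ) ≠ 0 := Nat.cast_ne_zero.mpr hp
  have hφξ : φ ξ = (p : ℚ) • (y + (p : ℚ)⁻¹ • ξ ^ p) := by
    rw [h, smul_add, smul_smul, mul_inv_cancel₀ hp', one_smul, Nat.cast_smul_eq_nsmul,
      nsmul_eq_mul, add_comm]
  rw [map_rat_smul, map_pow, hφξ, smul_pow, smul_smul, div_eq_inv_mul]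

theorem Padic.norm_pow_div_factorial_le_one (p : ℕ) [Fact p.Prime] (k : ℕ) :
    ‖(p : ℚ_[p]) ^ k / (k.factorial : ℚ_[p])‖ ≤ 1 := by
  have hp : (p : ℚ_[p]) ^ k ≠ 0 := pow_ne_zero k (Nat.cast_ne_zero.mpr (NeZero.ne p))
  have hk : (k.factorial : ℚ_[p]) ≠ 0 := Nat.cast_ne_zero.mpr k.factorial_ne_zero
  rw [Padic.norm_le_one_iff_val_nonneg, div_eq_mul_inv,
    Padic.valuation_mul hp (inv_ne_zero hk), Padic.valuation_inv, Padic.valuation_pow,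
    Padic.valuation_p, Padic.valuation_natCast, mul_one, ← sub_eq_add_neg, sub_nonneg]
  exact_mod_cast padicValNat_factorial_le p k

/-- If `φ(ξ) = ξ^p + py`, then the divided power `φ(ξ^k/k!)` equals
`(p^k/k!)·(y + (p-1)!·ξ^p/p!)^k`, and `p^k/k! ∈ ℤ_p` for all `k ≥ 0`
(so divided powers of `ξ` are stable under `φ`). -/
theorem stmt9 (p : ℕ) [hp : Fact p.Prime]
    (A : Type*) [CommRing A] [Algebra ℚ A]
    (φ : A →+* A) (ξ y : A) (h : φ ξ = ξ ^ p + (p : A) * y) (k : ℕ) :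
    φ (((Nat.factorial k : ℚ))⁻¹ • ξ ^ k)
        = ((p : ℚ) ^ k / (Nat.factorial k : ℚ)) •
            (y + ((Nat.factorial (p - 1) : ℚ) / (Nat.factorial p : ℚ)) • ξ ^ p) ^ k ∧
      ‖(p : ℚ_[p]) ^ k / (Nat.factorial k : ℚ_[p])‖ ≤ 1 := by
  rw [Nat.cast_factorial_pred_div_factorial hp.out.ne_zero]
  exact ⟨φ.map_inv_factorial_smul_pow hp.out.ne_zero h k, Padic.norm_pow_div_factorial_le_one p k⟩
end

section
/- Let A = ℤ_p[[π]] with divided power ideal structure: for k ≥ p^i, the element π^k/k! lies in p^{i-1}·A^{PD}, where A^{PD} is the p-adic completion of ℤ_p[[π]][π_1][ξ^n/n! : n ∈ ℕ] with ξ = π/π_1 and π_1^p ≡ π mod p. Concretely: writing π^k/k! = (ξ^k/k!)·π_1^k and π_1^{p^i} = π^{p^{i-1}} + p^i a, one gets π^k/k! ∈ p^{i-1} A^{PD} for k ≥ p^i. -/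
/-!
Write `π ^ k / k! = (ξ ^ k / k!) · π₁ ^ k`; it suffices that `p ^ (i - 1)` divides `π₁ ^ p ^ i`.
Since `π₁ ^ p ≡ π (mod p)`, lifting to `p ^ (i - 1)`-th powers gives
`π₁ ^ p ^ i ≡ π ^ p ^ (i - 1) (mod p ^ i)`, and `π ^ p ^ (i - 1) = (p ^ (i - 1))! · (ξ ^ _ / _!) · π₁ ^ _`
is divisible by `p ^ (i - 1)` because `p ^ (i - 1) ∣ (p ^ (i - 1))!`.
-/

section

variable {B : Type*} [CommRing B] {p : ℕ} {π π₁ ξ : B}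

theorem cast_dvd_pow_sub_of_eq_one_add_pow_sub_one (hp : p.Prime)
    (hπ : π = (1 + π₁) ^ p - 1) : (p : B) ∣ π₁ ^ p - π := by
  obtain ⟨r, hr⟩ := exists_add_pow_prime_eq hp (1 : B) π₁
  exact ⟨-(π₁ * r), by rw [hπ, hr]; ring⟩

theorem cast_pow_succ_dvd_pow_pow_sub_of_eq_one_add_pow_sub_one (hp : p.Prime)
    (hπ : π = (1 + π₁) ^ p - 1) (m : ℕ) :
    (p : B) ^ (m + 1) ∣ π₁ ^ p ^ (m + 1) - π ^ p ^ m := by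
  rw [pow_succ' p m, pow_mul]
  exact dvd_sub_pow_of_dvd_sub (cast_dvd_pow_sub_of_eq_one_add_pow_sub_one hp hπ) m

theorem factorial_dvd_mul_pow {dξ : ℕ → B} (hdξ : ∀ n : ℕ, (n.factorial : B) * dξ n = ξ ^ n)
    (n : ℕ) (y : B) : (n.factorial : B) ∣ (ξ * y) ^ n :=
  ⟨dξ n * y ^ n, by rw [mul_pow, ← hdξ, mul_assoc]⟩

theorem cast_pow_dvd_pow_pow_succ (hp : p.Prime) (hπ : π = (1 + π₁) ^ p - 1)
    (hξ : π = ξ * π₁) {dξ : ℕ → B} (hdξ : ∀ n : ℕ, (n.factorial : B) * dξ n = ξ ^ n) (m : ℕ) :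
    (p : B) ^ m ∣ π₁ ^ p ^ (m + 1) := by
  have hπ_pow : (p : B) ^ m ∣ π ^ p ^ m := by
    have hfac : ((p ^ m : ℕ) : B) ∣ ((p ^ m).factorial : B) :=
      Nat.cast_dvd_cast (Nat.dvd_factorial (pow_pos hp.pos m) le_rfl)
    rw [hξ]
    exact_mod_cast hfac.trans (factorial_dvd_mul_pow hdξ _ π₁)
  have hdiff := (pow_dvd_pow (p : B) m.le_succ).trans
    (cast_pow_succ_dvd_pow_pow_sub_of_eq_one_add_pow_sub_one hp hπ m)
  simpa using dvd_add hdiff hπ_pow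

end

theorem stmt13_general (p : ℕ) [hp : Fact p.Prime]
    (B : Type*) [CommRing B]
    (π π₁ ξ : B) (hπ : π = (1 + π₁) ^ p - 1) (hξ : π = ξ * π₁)
    (dξ : ℕ → B) (hdξ : ∀ n : ℕ, (Nat.factorial n : B) * dξ n = ξ ^ n)
    (i k : ℕ) (hi : 1 ≤ i) (hk : p ^ i ≤ k) :
    ∃ w : B, (Nat.factorial k : B) * w = π ^ k ∧ w ∈ Ideal.span {(p : B) ^ (i - 1)} := by
  refine ⟨dξ k * π₁ ^ k, by rw [← mul_assoc, hdξ, ← mul_pow, hξ], ?_⟩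
  obtain ⟨m, rfl⟩ : ∃ m, i = m + 1 := ⟨i - 1, by omega⟩
  rw [Nat.add_sub_cancel, Ideal.mem_span_singleton]
  exact dvd_mul_of_dvd_right
    ((cast_pow_dvd_pow_pow_succ hp.out hπ hξ hdξ m).trans (pow_dvd_pow π₁ hk)) _

/-- Divided-power estimate: with `π = (1+π₁)^p - 1`, `ξ = π/π₁`, and divided powers
`dξ n = ξ^n/n!` available in a `p`-torsion-free ring `B`, for every `i ≥ 1` and
`k ≥ p^i` the divided power `π^k/k!` lies in `p^{i-1}·B`. -/
theorem stmt13 (p : ℕ) [hp : Fact p.Prime]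
    (B : Type*) [CommRing B] [Algebra ℤ_[p] B]
    (htf : ∀ x : B, (p : B) * x = 0 → x = 0)
    (π π₁ ξ : B) (hπ : π = (1 + π₁) ^ p - 1) (hξ : π = ξ * π₁)
    (dξ : ℕ → B) (hdξ : ∀ n : ℕ, (Nat.factorial n : B) * dξ n = ξ ^ n)
    (i k : ℕ) (hi : 1 ≤ i) (hk : p ^ i ≤ k) :
    ∃ w : B, (Nat.factorial k : B) * w = π ^ k ∧ w ∈ Ideal.span {(p : B) ^ (i - 1)} :=
  stmt13_general p (hp := hp) B π π₁ ξ hπ hξ dξ hdξ i k hi hk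
end
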